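/- Support properties of the (A,N) orbital integral: Let f : GL₂(ℂ) → ℂ be continuous and compactly supported. Then: (i) there exists a compact set K ⊆ ℂ ∖ {0} such that M(x, c, f) = 0 for all x ∈ ℂ ∖ {0} whenever c ∉ K; and (ii) there exists R > 0 such that M(x, c, f) = 0 for all c ∈ ℂ ∖ {0} whenever |x| > R. -/

import Mathlib

open MeasureTheory Filter Topology Complex
open scoped ENNReal


/-- The multiplicative Haar measure `d×a = dA(a)/|a|²` on `ℂ ∖ {0}`. -/
noncomputable def mulHaar : Measure ℂ :=
  volume.withDensity fun a => ENNReal.ofReal ((‖a‖ ^ 2)⁻¹)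

/-- `n(x) = [[1, x], [0, 1]]`. -/
def nMat (x : ℂ) : Matrix (Fin 2) (Fin 2) ℂ := !![1, x; 0, 1]

/-- `z(c) = [[c, 0], [0, c]]`. -/
def zMat (c : ℂ) : Matrix (Fin 2) (Fin 2) ℂ := !![c, 0; 0, c]

/-- `s(a) = [[a, 0], [0, 1/a]]`. -/
noncomputable def sMat (a : ℂ) : Matrix (Fin 2) (Fin 2) ℂ := !![a, 0; 0, a⁻¹]

/-- `w₀ = [[0, 1], [1, 0]]`. -/
def w0Mat : Matrix (Fin 2) (Fin 2) ℂ := !![0, 1; 1, 0]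

/-- The `(A,N)` orbital integral
`M(x, c, f) = ∫_{ℂ∖{0}} ∫_ℂ f(s(a) z(c) n(x) w₀ n(y)) dA(y) d×a`. -/
noncomputable def Morb (f : Matrix (Fin 2) (Fin 2) ℂ → ℂ) (x c : ℂ) : ℂ :=
  ∫ a in {(0 : ℂ)}ᶜ, (∫ y : ℂ, f (sMat a * zMat c * nMat x * w0Mat * nMat y)) ∂mulHaar

/-!
On the support of `f`, a compact subset of `GL₂(ℂ)`, the determinant is bounded away from `0`
and from `∞`, and every continuous function of the entries is bounded. The point
`g = s(a) z(c) n(x) w₀ n(y) = [[acx, acxy + ac], [c/a, cy/a]]` has `det g = -c²` and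
`g₀₀ g₁₀ = c² x`, both independent of `a` and `y`. So the integrand of `M(x, c, f)` vanishes
identically unless `|c|²` lies in a compact interval of `(0, ∞)` and `|c|² |x|` is bounded,
which forces `|x|` to be bounded.
-/

lemma IsCompact.exists_pos_le_norm {X E : Type*} [TopologicalSpace X] [NormedAddCommGroup E]
    {S : Set X} (hS : IsCompact S) {φ : X → E} (hφ : Continuous φ) (hne : ∀ g ∈ S, φ g ≠ 0) :
    ∃ δ > 0, ∀ g ∈ S, δ ≤ ‖φ g‖ := by
  have hopen : IsOpen (φ '' S)ᶜ := (hS.image hφ).isClosed.isOpen_compl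
  have hzero : (0 : E) ∈ (φ '' S)ᶜ := fun ⟨g, hg, hg0⟩ => hne g hg hg0
  obtain ⟨δ, hδ, hball⟩ := Metric.isOpen_iff.mp hopen 0 hzero
  refine ⟨δ, hδ, fun g hg => not_lt.mp fun hlt => hball ?_ ⟨g, hg, rfl⟩⟩
  simpa using hlt

noncomputable def orbitMat (a c x y : ℂ) : Matrix (Fin 2) (Fin 2) ℂ :=
  sMat a * zMat c * nMat x * w0Mat * nMat y

lemma orbitMat_eq (a c x y : ℂ) :
    orbitMat a c x y = !![a * c * x, a * c * x * y + a * c; a⁻¹ * c, a⁻¹ * c * y] := by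
  ext i j
  fin_cases i <;> fin_cases j <;>
    simp [orbitMat, sMat, zMat, nMat, w0Mat, Matrix.mul_apply, Fin.sum_univ_two]

lemma det_orbitMat {a : ℂ} (ha : a ≠ 0) (c x y : ℂ) : (orbitMat a c x y).det = -c ^ 2 := by
  rw [orbitMat_eq, Matrix.det_fin_two_of]
  field_simp
  ring

lemma orbitMat_zero_zero_mul_one_zero {a : ℂ} (ha : a ≠ 0) (c x y : ℂ) :
    orbitMat a c x y 0 0 * orbitMat a c x y 1 0 = c ^ 2 * x := by
  simp only [orbitMat_eq, Matrix.of_apply, Matrix.cons_val', Matrix.cons_val_zero,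
    Matrix.cons_val_one, Matrix.empty_val', Matrix.cons_val_fin_one]
  field_simp

lemma Morb_eq_zero_of_forall_notMem_tsupport {f : Matrix (Fin 2) (Fin 2) ℂ → ℂ} {x c : ℂ}
    (h : ∀ a ≠ 0, ∀ y, orbitMat a c x y ∉ tsupport f) : Morb f x c = 0 := by
  unfold orbitMat at h
  refine setIntegral_eq_zero_of_forall_eq_zero fun a ha => ?_
  simp only [image_eq_zero_of_notMem_tsupport (h a ha _), integral_zero]

theorem AN_orbital_integral_support_general (f : Matrix (Fin 2) (Fin 2) ℂ → ℂ)
    (hcs : HasCompactSupport f) (hGL : tsupport f ⊆ {g | g.det ≠ 0}) :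
    (∃ K : Set ℂ, IsCompact K ∧ K ⊆ {(0 : ℂ)}ᶜ ∧
      ∀ c : ℂ, c ≠ 0 → c ∉ K → ∀ x : ℂ, x ≠ 0 → Morb f x c = 0) ∧
    (∃ R > (0 : ℝ), ∀ x : ℂ, x ≠ 0 → R < ‖x‖ →
      ∀ c : ℂ, c ≠ 0 → Morb f x c = 0) := by
  have hdet : Continuous fun g : Matrix (Fin 2) (Fin 2) ℂ => g.det := continuous_id.matrix_det
  obtain ⟨δ, hδ, hδS⟩ := hcs.isCompact.exists_pos_le_norm hdet hGL
  obtain ⟨D, hDS⟩ := hcs.isCompact.exists_bound_of_continuousOn hdet.continuousOn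
  obtain ⟨B, hBS⟩ := hcs.isCompact.exists_bound_of_continuousOn
    (f := fun g : Matrix (Fin 2) (Fin 2) ℂ => g 0 0 * g 1 0) (by fun_prop)
  have hbounds : ∀ {a c x y : ℂ}, a ≠ 0 → orbitMat a c x y ∈ tsupport f →
      δ ≤ ‖c‖ ^ 2 ∧ ‖c‖ ^ 2 ≤ D ∧ ‖c‖ ^ 2 * ‖x‖ ≤ B := by
    intro a c x y ha hg
    have h₁ := hδS _ hg
    have h₂ := hDS _ hg
    have h₃ := hBS _ hg
    simp only [det_orbitMat ha, orbitMat_zero_zero_mul_one_zero ha, norm_neg, norm_pow,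
      norm_mul] at h₁ h₂ h₃
    exact ⟨h₁, h₂, h₃⟩
  refine ⟨⟨Metric.closedBall 0 √D \ Metric.ball 0 √δ,
    (isCompact_closedBall _ _).diff Metric.isOpen_ball, ?_, ?_⟩, ⟨max (B / δ) 1, by positivity, ?_⟩⟩
  · rintro c ⟨-, hc⟩ rfl
    exact hc (by simpa using Real.sqrt_pos.mpr hδ)
  · intro c _ hcK x _
    refine Morb_eq_zero_of_forall_notMem_tsupport fun a ha y hg => hcK ⟨?_, ?_⟩
    all_goals obtain ⟨hδc, hcD, -⟩ := hbounds ha hg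
    · simpa using Real.abs_le_sqrt hcD
    · simpa [Real.lt_sqrt (norm_nonneg c)] using hδc
  · intro x _ hR c _
    refine Morb_eq_zero_of_forall_notMem_tsupport fun a ha y hg => ?_
    obtain ⟨hδc, -, hcx⟩ := hbounds ha hg
    have hxB : ‖x‖ ≤ B / δ := by
      rw [le_div_iff₀ hδ]
      nlinarith [norm_nonneg x]
    exact (hR.trans_le' (le_max_left _ _)).not_ge hxB

/-- **Support properties of the `(A,N)` orbital integral.** (i) There is a compact
`K ⊆ ℂ ∖ {0}` such that `M(x, c, f) = 0` for all `x ≠ 0` whenever `c ∉ K`; (ii) there is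
`R > 0` such that `M(x, c, f) = 0` for all `c ≠ 0` whenever `|x| > R`. -/
theorem AN_orbital_integral_support (f : Matrix (Fin 2) (Fin 2) ℂ → ℂ)
    (hf : Continuous f) (hcs : HasCompactSupport f) (hGL : tsupport f ⊆ {g | g.det ≠ 0}) :
    (∃ K : Set ℂ, IsCompact K ∧ K ⊆ {(0 : ℂ)}ᶜ ∧
      ∀ c : ℂ, c ≠ 0 → c ∉ K → ∀ x : ℂ, x ≠ 0 → Morb f x c = 0) ∧
    (∃ R > (0 : ℝ), ∀ x : ℂ, x ≠ 0 → R < ‖x‖ →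
      ∀ c : ℂ, c ≠ 0 → Morb f x c = 0) :=
  AN_orbital_integral_support_general f hcs hGL
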